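/- The underlying multigraph functor U from quivers to multigraphs does not admit a right adjoint, because it is a left adjoint whose right adjoint D⃗ (the associated digraph functor) fails to preserve coequalizers; equivalently, D⃗ is not cocontinuous. -/

import Mathlib

/-- A set-system hypergraph. -/
structure SSHyp : Type 1 where
  E : Type
  V : Type
  eps : E → Set V

/-- A multigraph is a set-system hypergraph all of whose edges have 1 or 2 endpoints. -/
def IsMulti (M : SSHyp) : Prop := ∀ e, ∃ v w, M.eps e = {v, w}

/-- A traditional set-system hypergraph homomorphism. -/
structure TradHom (G H : SSHyp) where
  fe : G.E → H.E
  fv : G.V → H.V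
  comm : ∀ e, H.eps (fe e) = fv '' G.eps e

def TradHom.comp {G H K : SSHyp} (φ : TradHom G H) (ψ : TradHom H K) : TradHom G K :=
  ⟨ψ.fe ∘ φ.fe, ψ.fv ∘ φ.fv, fun e => by
    rw [Function.comp_apply, ψ.comm, φ.comm, Set.image_comp]⟩

/-- A quiver. -/
structure Quiv : Type 1 where
  V : Type
  E : Type
  s : E → V
  t : E → V

/-- A quiver homomorphism. -/
structure QuivHom (Q Q' : Quiv) where
  fv : Q.V → Q'.V
  fe : Q.E → Q'.E
  hs : ∀ e, Q'.s (fe e) = fv (Q.s e)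
  ht : ∀ e, Q'.t (fe e) = fv (Q.t e)

def QuivHom.comp {A B C : Quiv} (φ : QuivHom A B) (ψ : QuivHom B C) : QuivHom A C :=
  ⟨ψ.fv ∘ φ.fv, ψ.fe ∘ φ.fe,
    fun e => by simp [ψ.hs, φ.hs], fun e => by simp [ψ.ht, φ.ht]⟩

/-- `D⃗`: the associated digraph (quiver) of a multigraph. -/
def Dvec (M : SSHyp) : Quiv :=
  ⟨M.V, {q : M.E × M.V × M.V // M.eps q.1 = {q.2.1, q.2.2}},
    fun q => q.val.2.1, fun q => q.val.2.2⟩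

/-- The action of `D⃗` on traditional homomorphisms. -/
def DvecHom {M M' : SSHyp} (ψ : TradHom M M') : QuivHom (Dvec M) (Dvec M') :=
  ⟨ψ.fv,
    fun q => ⟨(ψ.fe q.val.1, ψ.fv q.val.2.1, ψ.fv q.val.2.2), by
      show M'.eps (ψ.fe q.val.1) = _
      rw [ψ.comm, q.property, Set.image_insert_eq, Set.image_singleton]⟩,
    fun q => rfl, fun q => rfl⟩

/-- `q` is a coequalizer of `f, g` in the category of multigraphs. -/
def IsCoeqM {A B C : SSHyp} (f g : TradHom A B) (q : TradHom B C) : Prop :=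
  f.comp q = g.comp q ∧
  ∀ (D : SSHyp), IsMulti D → ∀ h : TradHom B D, f.comp h = g.comp h →
    ∃! k : TradHom C D, q.comp k = h

/-- `q` is a coequalizer of `f, g` in the category of quivers. -/
def IsCoeqQ {A B C : Quiv} (f g : QuivHom A B) (q : QuivHom B C) : Prop :=
  f.comp q = g.comp q ∧
  ∀ (D : Quiv) (h : QuivHom B D), f.comp h = g.comp h →
    ∃! k : QuivHom C D, q.comp k = h


/-! A right adjoint of `D⃗` would make `D⃗` preserve coequalizers of multigraphs. It does not:
glueing the two endpoints of a single 2-edge yields a 1-edge, whose digraph has one loop, whereas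
the two opposite arcs of the 2-edge stay distinct in any coequalizer of quivers, since that
coequalizer is taken of maps out of an arcless quiver and so cannot identify arcs. -/

@[ext]
lemma TradHom.ext {G H : SSHyp} {φ ψ : TradHom G H}
    (he : φ.fe = ψ.fe) (hv : φ.fv = ψ.fv) : φ = ψ := by
  cases φ; cases ψ; cases he; cases hv; rfl

@[ext]
lemma QuivHom.ext {Q Q' : Quiv} {φ ψ : QuivHom Q Q'}
    (hv : φ.fv = ψ.fv) (he : φ.fe = ψ.fe) : φ = ψ := by
  cases φ; cases ψ; cases hv; cases he; rfl

lemma QuivHom.comp_assoc {A B C D : Quiv} (φ : QuivHom A B) (ψ : QuivHom B C)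
    (χ : QuivHom C D) : (φ.comp ψ).comp χ = φ.comp (ψ.comp χ) :=
  QuivHom.ext rfl rfl

lemma DvecHom_comp {M M' M'' : SSHyp} (φ : TradHom M M') (ψ : TradHom M' M'') :
    DvecHom (φ.comp ψ) = (DvecHom φ).comp (DvecHom ψ) :=
  QuivHom.ext rfl (funext fun _ => Subtype.ext rfl)

/-- `θ` is the counit of an adjunction between `D⃗`, restricted to multigraphs, and `R`. -/
def IsDvecRightAdjoint (R : Quiv → SSHyp) (θ : ∀ Q : Quiv, QuivHom (Dvec (R Q)) Q) : Prop :=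
  ∀ (M : SSHyp), IsMulti M → ∀ (Q : Quiv) (φ : QuivHom (Dvec M) Q),
    ∃! φh : TradHom M (R Q), (DvecHom φh).comp (θ Q) = φ

section RightAdjoint

variable {R : Quiv → SSHyp} {θ : ∀ Q : Quiv, QuivHom (Dvec (R Q)) Q}

lemma IsDvecRightAdjoint.transpose_injective (hadj : IsDvecRightAdjoint R θ) {M : SSHyp}
    (hM : IsMulti M) {Q : Quiv} {a b : TradHom M (R Q)}
    (hab : (DvecHom a).comp (θ Q) = (DvecHom b).comp (θ Q)) : a = b :=
  (hadj M hM Q _).unique rfl hab.symm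

lemma IsDvecRightAdjoint.isCoeqQ_DvecHom (hR : ∀ Q, IsMulti (R Q))
    (hadj : IsDvecRightAdjoint R θ) {A B C : SSHyp} (hA : IsMulti A) (hB : IsMulti B)
    (hC : IsMulti C) {f g : TradHom A B} {q : TradHom B C} (hq : IsCoeqM f g q) :
    IsCoeqQ (DvecHom f) (DvecHom g) (DvecHom q) := by
  refine ⟨by rw [← DvecHom_comp, ← DvecHom_comp, hq.1], fun D h hfg => ?_⟩
  obtain ⟨hh, hhT, hhU⟩ := hadj B hB D h
  have hfgh : f.comp hh = g.comp hh := hadj.transpose_injective hA <| by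
    rw [DvecHom_comp, DvecHom_comp, QuivHom.comp_assoc, QuivHom.comp_assoc, hhT, hfg]
  obtain ⟨kh, khT, khU⟩ := hq.2 (R D) (hR D) hh hfgh
  refine ⟨(DvecHom kh).comp (θ D), ?_, fun k hk => ?_⟩
  · change (DvecHom q).comp ((DvecHom kh).comp (θ D)) = h
    rw [← QuivHom.comp_assoc, ← DvecHom_comp, khT, hhT]
  · obtain ⟨kt, ktT, -⟩ := hadj C hC D k
    have hkt : q.comp kt = hh := hhU _ <| by
      beta_reduce; rw [DvecHom_comp, QuivHom.comp_assoc, ktT]; exact hk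
    rw [← ktT, khU _ hkt]

end RightAdjoint

/-- Collapsing all vertices to one while keeping the arcs is a cocone over any pair of maps out
of an arcless quiver. -/
lemma IsCoeqQ.fe_injective_of_isEmpty {A B C : Quiv} [IsEmpty A.E] {f g : QuivHom A B}
    {q : QuivHom B C} (hq : IsCoeqQ f g q) : Function.Injective q.fe := by
  let collapse : QuivHom B ⟨Unit, B.E, fun _ => (), fun _ => ()⟩ :=
    ⟨fun _ => (), id, fun _ => rfl, fun _ => rfl⟩
  obtain ⟨k, hk, -⟩ := hq.2 _ collapse (QuivHom.ext rfl (funext isEmptyElim))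
  exact Function.LeftInverse.injective (g := k.fe) fun e => congrFun (congrArg QuivHom.fe hk) e

namespace SSHyp

def point : SSHyp := ⟨Empty, Unit, Empty.elim⟩

def edge : SSHyp := ⟨Unit, Bool, fun _ => {false, true}⟩

def loop : SSHyp := ⟨Unit, Unit, fun _ => {()}⟩

lemma isMulti_point : IsMulti point := fun e => e.elim

lemma isMulti_edge : IsMulti edge := fun _ => ⟨false, true, rfl⟩

lemma isMulti_loop : IsMulti loop := fun _ => ⟨(), (), (Set.pair_eq_singleton ()).symm⟩

def edgeSource : TradHom point edge := ⟨Empty.elim, fun _ => false, fun e => e.elim⟩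

def edgeTarget : TradHom point edge := ⟨Empty.elim, fun _ => true, fun e => e.elim⟩

def edgeToLoop : TradHom edge loop := ⟨id, fun _ => (), fun _ => by simp [edge, loop]⟩

lemma isCoeqM_edgeToLoop : IsCoeqM edgeSource edgeTarget edgeToLoop := by
  refine ⟨TradHom.ext (funext fun e => e.elim) rfl, fun D _ h hfg => ?_⟩
  have hv : h.fv false = h.fv true := congrFun (congrArg TradHom.fv hfg) ()
  have hfv : h.fv = fun _ => h.fv false := funext fun b => by cases b <;> simp [hv]
  refine ⟨⟨h.fe, fun _ => h.fv false, fun e => ?_⟩, TradHom.ext rfl hfv.symm, fun k hk => ?_⟩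
  · rw [h.comm e, hfv]
    simp only [edge, loop, Set.image_insert_eq, Set.image_singleton, Set.pair_eq_singleton]
  · have hk : edgeToLoop.comp k = h := hk
    exact TradHom.ext (congrArg (·.fe) hk) (funext fun _ => congrFun (congrArg (·.fv) hk) false)

instance : IsEmpty (Dvec point).E := ⟨fun e => e.val.1.elim⟩

lemma not_isCoeqQ_DvecHom_edgeToLoop :
    ¬ IsCoeqQ (DvecHom edgeSource) (DvecHom edgeTarget) (DvecHom edgeToLoop) := by
  intro hq
  let forward : (Dvec edge).E := ⟨((), false, true), rfl⟩
  let backward : (Dvec edge).E := ⟨((), true, false), Set.pair_comm false true⟩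
  have hne : forward ≠ backward := fun h => Bool.false_ne_true (congrArg (·.val.2.1) h)
  exact hne (hq.fe_injective_of_isEmpty (Subtype.ext rfl))

end SSHyp

/-- The associated digraph functor `D⃗` (the right adjoint of the underlying multigraph
functor `U`) is not cocontinuous: it fails to preserve a coequalizer of multigraphs,
and consequently `D⃗` does not itself admit a right adjoint (so `U ⊣ D⃗` does not extend
to a further adjunction). -/
theorem associated_digraph_not_cocontinuous :
    (∃ (A B C : SSHyp), IsMulti A ∧ IsMulti B ∧ IsMulti C ∧
      ∃ (f g : TradHom A B) (q : TradHom B C), IsCoeqM f g q ∧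
        ¬ IsCoeqQ (DvecHom f) (DvecHom g) (DvecHom q)) ∧
    ¬ ∃ (R : Quiv → SSHyp) (_ : ∀ Q, IsMulti (R Q))
        (θ : ∀ Q : Quiv, QuivHom (Dvec (R Q)) Q),
      ∀ (M : SSHyp), IsMulti M → ∀ (Q : Quiv) (φ : QuivHom (Dvec M) Q),
        ∃! φh : TradHom M (R Q), (DvecHom φh).comp (θ Q) = φ := by
  have hcoeq := SSHyp.isCoeqM_edgeToLoop
  have hnot := SSHyp.not_isCoeqQ_DvecHom_edgeToLoop
  have hA := SSHyp.isMulti_point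
  have hB := SSHyp.isMulti_edge
  have hC := SSHyp.isMulti_loop
  refine ⟨⟨_, _, _, hA, hB, hC, _, _, _, hcoeq, hnot⟩, ?_⟩
  rintro ⟨R, hR, θ, hadj⟩
  exact hnot (IsDvecRightAdjoint.isCoeqQ_DvecHom hR hadj hA hB hC hcoeq)
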